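/- Let 0 < μ_min ≤ μ_max and define b'' = (μ_max + μ_min)/μ_min². For all μ, μ' ∈ [μ_min, μ_max], the total variation of the function x ↦ B(x;μ) − B(x;μ') over [0,∞), which equals ∫₀^∞ |μ·e^{−μx} − μ'·e^{−μ'x}| dx, is at most b''·|μ − μ'|. -/

import Mathlib

/-!
Write `μ e^{-μx} - μ' e^{-μ'x} = (μ - μ') e^{-μx} + μ' (e^{-μx} - e^{-μ'x})`. Since `t ↦ e^{-t}` is
`e^{-μmin x}`-Lipschitz on `[μmin x, ∞)`, the integrand is at most
`(1 + μmax x) e^{-μmin x} |μ - μ'|`, and the Gamma integrals `∫₀^∞ xⁿ e^{-rx} dx = n! / r^{n+1}`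
for `n = 0, 1` give `1/μmin + μmax/μmin² = (μmax + μmin)/μmin²`.
-/

open Set MeasureTheory Real Nat

theorem abs_exp_neg_sub_exp_neg_le {m a b : ℝ} (ha : m ≤ a) (hb : m ≤ b) :
    |exp (-a) - exp (-b)| ≤ exp (-m) * |a - b| := by
  wlog hab : b ≤ a generalizing a b
  · rw [abs_sub_comm, abs_sub_comm a]
    exact this hb ha (le_of_not_ge hab)
  have hexp : exp (-b) - exp (-a) = exp (-b) * (1 - exp (-(a - b))) := by
    rw [mul_sub, ← exp_add]; ring_nf
  rw [abs_of_nonpos (sub_nonpos.2 (exp_le_exp.2 (neg_le_neg hab))),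
    abs_of_nonneg (sub_nonneg.2 hab), neg_sub, hexp]
  have hsub : 1 - exp (-(a - b)) ≤ a - b := by linarith [one_sub_le_exp_neg (a - b)]
  have hsub_nonneg : 0 ≤ 1 - exp (-(a - b)) := by
    linarith [exp_le_one_iff.2 (neg_nonpos.2 (sub_nonneg.2 hab))]
  exact mul_le_mul (exp_le_exp.2 (neg_le_neg hb)) hsub hsub_nonneg (exp_pos _).le

theorem abs_mul_exp_neg_mul_sub_le {m M μ μ' x : ℝ} (hμ : m ≤ μ) (hμ' : m ≤ μ')
    (hμ'M : |μ'| ≤ M) (hx : 0 ≤ x) :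
    |μ * exp (-μ * x) - μ' * exp (-μ' * x)| ≤ (1 + M * x) * exp (-m * x) * |μ - μ'| := by
  have hdecay : exp (-μ * x) ≤ exp (-m * x) := exp_le_exp.2 (by nlinarith)
  have hlip : |exp (-μ * x) - exp (-μ' * x)| ≤ exp (-m * x) * (x * |μ - μ'|) := by
    simpa only [neg_mul, ← sub_mul, abs_mul, abs_of_nonneg hx, mul_comm x] using
      abs_exp_neg_sub_exp_neg_le (mul_le_mul_of_nonneg_right hμ hx)
        (mul_le_mul_of_nonneg_right hμ' hx)
  calc |μ * exp (-μ * x) - μ' * exp (-μ' * x)|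
      = |(μ - μ') * exp (-μ * x) + μ' * (exp (-μ * x) - exp (-μ' * x))| := by ring_nf
    _ ≤ |μ - μ'| * exp (-m * x) + M * (exp (-m * x) * (x * |μ - μ'|)) := by
      refine (abs_add_le _ _).trans ?_
      rw [abs_mul, abs_mul, abs_of_pos (exp_pos _)]
      gcongr
      exact (abs_nonneg _).trans hμ'M
    _ = (1 + M * x) * exp (-m * x) * |μ - μ'| := by ring

theorem integral_pow_mul_exp_neg_mul_Ioi (n : ℕ) {r : ℝ} (hr : 0 < r) :
    ∫ x in Ioi (0 : ℝ), x ^ n * exp (-r * x) = n ! / r ^ (n + 1) := by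
  have hGamma := integral_rpow_mul_exp_neg_mul_Ioi (a := (n + 1 : ℕ)) (by positivity) hr
  simp only [rpow_natCast, Nat.cast_add_one, add_sub_cancel_right, Gamma_nat_eq_factorial]
    at hGamma
  simp only [neg_mul, hGamma]
  rw [← Nat.cast_add_one, rpow_natCast, one_div_pow, one_div_mul_eq_div]

theorem integrableOn_pow_mul_exp_neg_mul_Ioi (n : ℕ) {r : ℝ} (hr : 0 < r) :
    IntegrableOn (fun x ↦ x ^ n * exp (-r * x)) (Ioi 0) :=
  Integrable.of_integral_ne_zero <| by
    rw [integral_pow_mul_exp_neg_mul_Ioi n hr]; positivity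

theorem exp_cdf_total_variation_in_rate_general
    (μmin μmax : ℝ) (hμmin : 0 < μmin)
    (μ μ' : ℝ) (hμ : μ ∈ Icc μmin μmax) (hμ' : μ' ∈ Icc μmin μmax) :
    ∫ x in Ioi (0:ℝ), |μ * Real.exp (-μ * x) - μ' * Real.exp (-μ' * x)| ≤
      ((μmax + μmin) / μmin ^ 2) * |μ - μ'| := by
  have hμ'_abs : |μ'| ≤ μmax := by rw [abs_of_pos (hμmin.trans_le hμ'.1)]; exact hμ'.2
  have hbound : ∀ x ∈ Ioi (0 : ℝ), |μ * exp (-μ * x) - μ' * exp (-μ' * x)| ≤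
      (1 + μmax * x) * exp (-μmin * x) * |μ - μ'| := fun x hx ↦
    abs_mul_exp_neg_mul_sub_le hμ.1 hμ'.1 hμ'_abs hx.le
  have hsplit : (fun x ↦ (1 + μmax * x) * exp (-μmin * x)) =
      fun x ↦ x ^ 0 * exp (-μmin * x) + μmax * (x ^ 1 * exp (-μmin * x)) := by
    ext x; ring
  have hint0 := integrableOn_pow_mul_exp_neg_mul_Ioi 0 hμmin
  have hint1 := (integrableOn_pow_mul_exp_neg_mul_Ioi 1 hμmin).const_mul μmax
  have hint : IntegrableOn (fun x ↦ (1 + μmax * x) * exp (-μmin * x)) (Ioi 0) := by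
    rw [hsplit]; exact hint0.add hint1
  calc ∫ x in Ioi (0:ℝ), |μ * exp (-μ * x) - μ' * exp (-μ' * x)|
      ≤ ∫ x in Ioi (0:ℝ), (1 + μmax * x) * exp (-μmin * x) * |μ - μ'| :=
        integral_mono_of_nonneg (.of_forall fun _ ↦ abs_nonneg _) (hint.mul_const _)
          ((ae_restrict_iff' measurableSet_Ioi).2 (.of_forall hbound))
    _ = ((μmax + μmin) / μmin ^ 2) * |μ - μ'| := by
        rw [integral_mul_const, hsplit, integral_add hint0 hint1, integral_const_mul,
          integral_pow_mul_exp_neg_mul_Ioi 0 hμmin, integral_pow_mul_exp_neg_mul_Ioi 1 hμmin]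
        field_simp
        ring

theorem exp_cdf_total_variation_in_rate
    (μmin μmax : ℝ) (hμmin : 0 < μmin) (hle : μmin ≤ μmax)
    (μ μ' : ℝ) (hμ : μ ∈ Icc μmin μmax) (hμ' : μ' ∈ Icc μmin μmax) :
    ∫ x in Ioi (0:ℝ), |μ * Real.exp (-μ * x) - μ' * Real.exp (-μ' * x)| ≤
      ((μmax + μmin) / μmin ^ 2) * |μ - μ'| :=
  exp_cdf_total_variation_in_rate_general μmin μmax hμmin μ μ' hμ hμ'
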